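/- arXiv:1403.0986 — 5 statements merged into one kernel-verified Lean document; each statement's English description precedes it below -/
import Mathlib

section
/- Let p > 0, λ > 0, σ = (π/4)·min{1,1/p}, and let f(z) = exp(-λ√2·z^{-p}) be holomorphic on ℂ ∖ (-∞,0]. Then for every x > 0, the maximum of |f| over the closed disk of center x and radius x·sin σ is at most exp(-λ/(2x)^p). -/
/-!
A point `z` of the disk satisfies `x |Im z| = |Im ((z - x) z̄)| ≤ |z - x| |z| ≤ x sin σ |z|`, so
`|arg z| ≤ σ`. Hence `|arg z^{-p}| ≤ pσ ≤ π/4` and `Re z^{-p} ≥ |z|^{-p} / √2`, which together with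
`|z| ≤ 2x` bounds `|f(z)| = exp(-λ√2 Re z^{-p})`.
-/

open Real Complex
open scoped ComplexConjugate

lemma mul_min_one_one_div_le_one {p : ℝ} (hp : 0 ≤ p) : p * min 1 (1 / p) ≤ 1 :=
  (mul_le_mul_of_nonneg_left (min_le_right _ _) hp).trans (by rw [mul_one_div]; exact div_self_le_one p)

namespace Complex

lemma sub_le_re_of_mem_closedBall {x r : ℝ} {z : ℂ} (hz : z ∈ Metric.closedBall (x : ℂ) r) :
    x - r ≤ z.re := by
  have h := (abs_le.mp ((abs_re_le_norm (z - x)).trans (mem_closedBall_iff_norm.mp hz))).1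
  simp only [sub_re, ofReal_re] at h
  linarith

lemma abs_arg_le_of_mem_closedBall {x σ : ℝ} (hx : 0 < x) (hσ₀ : 0 ≤ σ) (hσ : σ ≤ π / 2)
    {z : ℂ} (hz : z ∈ Metric.closedBall (x : ℂ) (x * Real.sin σ)) : |arg z| ≤ σ := by
  have hre : 0 ≤ z.re := by
    nlinarith [sub_le_re_of_mem_closedBall hz, Real.sin_le_one σ]
  have hdist : x * |z.im| ≤ ‖z - x‖ * ‖z‖ :=
    calc x * |z.im| = |((z - x) * conj z).im| := by
          simp only [mul_im, sub_re, sub_im, ofReal_re, ofReal_im, conj_re, conj_im]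
          rw [← abs_of_pos hx, ← abs_mul, abs_of_pos hx]
          ring_nf
      _ ≤ ‖z - x‖ * ‖z‖ := by rw [← norm_conj z, ← norm_mul]; exact abs_im_le_norm _
  have him : |z.im| ≤ Real.sin σ * ‖z‖ := by
    refine le_of_mul_le_mul_left ?_ hx
    nlinarith [mem_closedBall_iff_norm.mp hz, norm_nonneg z]
  have hsin : |z.im / ‖z‖| ≤ Real.sin σ := by
    rw [abs_div, abs_norm]
    exact div_le_of_le_mul₀ (norm_nonneg z) (sin_nonneg_of_nonneg_of_le_pi hσ₀ (by linarith)) him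
  have harcsin : arcsin (Real.sin σ) = σ := arcsin_sin (by linarith) hσ
  rw [arg_of_re_nonneg hre, abs_le, ← harcsin, ← arcsin_neg]
  exact ⟨monotone_arcsin (abs_le.mp hsin).1, monotone_arcsin (abs_le.mp hsin).2⟩

lemma norm_rpow_neg_mul_le_re_cpow_neg {p : ℝ} {z : ℂ} (h : |p * arg z| ≤ π / 4) :
    ‖z‖ ^ (-p) * (√2 / 2) ≤ (z ^ (-(p : ℂ))).re := by
  rw [← ofReal_neg, cpow_ofReal_re, mul_neg, Real.cos_neg, mul_comm (arg z), ← Real.cos_abs]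
  gcongr
  rw [← cos_pi_div_four]
  exact cos_le_cos_of_nonneg_of_le_pi (abs_nonneg _) (by linarith [pi_pos]) h

lemma norm_exp_neg_mul_cpow_neg_le {c p : ℝ} (hc : 0 ≤ c) {z : ℂ} (h : |p * arg z| ≤ π / 4) :
    ‖exp (-((c * √2 : ℝ) : ℂ) * z ^ (-(p : ℂ)))‖ ≤ Real.exp (-c * ‖z‖ ^ (-p)) := by
  rw [norm_exp, ← ofReal_neg, re_ofReal_mul, Real.exp_le_exp]
  calc -(c * √2) * (z ^ (-(p : ℂ))).re ≤ -(c * √2) * (‖z‖ ^ (-p) * (√2 / 2)) :=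
        mul_le_mul_of_nonpos_left (norm_rpow_neg_mul_le_re_cpow_neg h) (by simp; positivity)
    _ = -c * ‖z‖ ^ (-p) := by
        ring_nf
        rw [Real.sq_sqrt zero_le_two]
        ring

end Complex

/-- for `f(z) = exp(-λ√2·z^{-p})` (principal branch), `x > 0`, and `z` in the
closed disk of center `x` and radius `x·sin σ`, one has `|f(z)| ≤ exp(-λ/(2x)^p)`. -/
theorem max_abs_on_disk_le
    (p lam : ℝ) (hp : 0 < p) (hlam : 0 < lam)
    (σ : ℝ) (hσ : σ = (Real.pi / 4) * min 1 (1 / p))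
    (x : ℝ) (hx : 0 < x)
    (z : ℂ) (hz : z ∈ Metric.closedBall (x : ℂ) (x * Real.sin σ)) :
    ‖Complex.exp (-(((lam * Real.sqrt 2 : ℝ)) : ℂ) * z ^ (-(p : ℂ)))‖
      ≤ Real.exp (-lam / (2 * x) ^ p) := by
  have hpσ : p * σ ≤ π / 4 := by
    rw [hσ, mul_left_comm]; nlinarith [mul_min_one_one_div_le_one hp.le, pi_pos]
  have hσ₀ : 0 ≤ σ := by rw [hσ]; positivity
  have hσ_le : σ ≤ π / 4 := by rw [hσ]; nlinarith [min_le_left 1 (1 / p), pi_pos]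
  have harg : |p * arg z| ≤ π / 4 := by
    rw [abs_mul, abs_of_pos hp]
    refine le_trans ?_ hpσ
    gcongr
    exact abs_arg_le_of_mem_closedBall hx hσ₀ (by linarith [pi_pos]) hz
  have hz₀ : 0 < ‖z‖ := by
    have hre : 0 < z.re := by
      nlinarith [sub_le_re_of_mem_closedBall hz, Real.sin_le hσ₀, pi_lt_four]
    exact norm_pos_iff.mpr fun h ↦ by simp [h] at hre
  have hnorm : ‖z‖ ≤ 2 * x := by
    have := norm_le_of_mem_closedBall hz
    rw [norm_real, Real.norm_of_nonneg hx.le] at this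
    nlinarith [Real.sin_le_one σ]
  calc _ ≤ Real.exp (-lam * ‖z‖ ^ (-p)) := norm_exp_neg_mul_cpow_neg_le hlam.le harg
    _ ≤ Real.exp (-lam * (2 * x) ^ (-p)) := Real.exp_le_exp.mpr <|
        mul_le_mul_of_nonpos_left (rpow_le_rpow_of_nonpos hz₀ hnorm (by linarith)) (by linarith)
    _ = Real.exp (-lam / (2 * x) ^ p) := by rw [rpow_neg (by positivity), div_eq_mul_inv]
end

section
/- Let p > 0, λ > 0, σ = (π/4)·min{1,1/p}, and f_λ(x) = exp(-λ√2·x^{-p}) for x > 0. Then for all integers k ≥ 0 and all x > 0, |f_λ^{(k)}(x)| ≤ (2/sin σ)^k · (k/(λpe))^{k/p} · k!. -/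
/-!
On the right half-plane `f_λ` is the restriction of the holomorphic function
`F(z) = exp(-λ√2·z^{-p})`. On the closed disc of centre `x` and radius `x sin σ` one has
`|arg z| ≤ σ`, hence `|arg z^{-p}| ≤ pσ ≤ π/4`, so `Re (√2·z^{-p}) ≥ |z|^{-p} ≥ (2x)^{-p}` and
`|F| ≤ exp(-λ(2x)^{-p})`. Cauchy's estimate bounds `|f_λ^{(k)}(x)|` by
`k!·exp(-λ(2x)^{-p})/(x sin σ)^k`, and `exp(-λ(2x)^{-p}) ≤ (2x)^k·sup_{y>0} y^k e^{-λy^p}`, the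
supremum being `(k/(λpe))^{k/p}`.
-/

open Real Metric Topology

theorem rpow_mul_exp_neg_le {t a : ℝ} (ht : 0 ≤ t) (ha : 0 < a) :
    t ^ a * rexp (-t) ≤ (a / rexp 1) ^ a := by
  have hexp : t / a ≤ rexp (t / a - 1) := by linarith [add_one_le_exp (t / a - 1)]
  calc t ^ a * rexp (-t) = (t / a) ^ a * a ^ a * rexp (-t) := by
        rw [div_rpow ht ha.le, div_mul_cancel₀ _ (rpow_pos_of_pos ha a).ne']
    _ ≤ rexp (t / a - 1) ^ a * a ^ a * rexp (-t) := by gcongr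
    _ = (a / rexp 1) ^ a := by
        rw [← exp_mul, div_rpow ha.le (exp_pos 1).le, ← exp_mul, sub_mul,
          div_mul_cancel₀ _ ha.ne', one_mul, exp_sub, exp_neg]
        field_simp

theorem rpow_mul_exp_neg_mul_rpow_le {p lam a y : ℝ} (hp : 0 < p) (hlam : 0 < lam) (ha : 0 ≤ a)
    (hy : 0 < y) :
    y ^ a * rexp (-(lam * y ^ p)) ≤ (a / (lam * p * rexp 1)) ^ (a / p) := by
  rcases ha.eq_or_lt with rfl | ha
  · simpa using exp_le_one_iff.mpr (neg_nonpos.mpr (by positivity))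
  have hb : 0 < a / p := by positivity
  have ht : 0 ≤ lam * y ^ p := by positivity
  calc y ^ a * rexp (-(lam * y ^ p))
      = (lam * y ^ p) ^ (a / p) * rexp (-(lam * y ^ p)) / lam ^ (a / p) := by
        rw [mul_rpow hlam.le (by positivity), ← rpow_mul hy.le, mul_div_cancel₀ _ hp.ne']
        field_simp
    _ ≤ (a / p / rexp 1) ^ (a / p) / lam ^ (a / p) := by
        gcongr; exact rpow_mul_exp_neg_le ht hb
    _ = (a / (lam * p * rexp 1)) ^ (a / p) := by
        rw [← div_rpow (by positivity) hlam.le]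
        congr 1
        field_simp

theorem ofReal_iteratedDeriv_eq_iteratedDeriv {F : ℂ → ℂ} {U : Set ℂ} (hU : IsOpen U)
    (hF : DifferentiableOn ℂ F U) {f : ℝ → ℝ} (hfF : ∀ t : ℝ, (t : ℂ) ∈ U → (f t : ℂ) = F t)
    (k : ℕ) : ∀ t : ℝ, (t : ℂ) ∈ U → ((iteratedDeriv k f t : ℝ) : ℂ) = iteratedDeriv k F t := by
  induction k with
  | zero => simpa using hfF
  | succ k ih =>
    intro t ht
    have hG : HasDerivAt (iteratedDeriv k F) (iteratedDeriv (k + 1) F t) t := by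
      rw [iteratedDeriv_succ, iteratedDeriv_eq_iterate]
      exact ((hF.analyticOnNhd hU).iterated_deriv k t ht).differentiableAt.hasDerivAt
    have hnear : ∀ᶠ s in 𝓝 t, ((iteratedDeriv k f s : ℝ) : ℂ) = iteratedDeriv k F s :=
      Filter.eventually_of_mem ((hU.preimage Complex.continuous_ofReal).mem_nhds ht) ih
    have hre : HasDerivAt (iteratedDeriv k f) (iteratedDeriv (k + 1) F t).re t :=
      hG.real_of_complex.congr_of_eventuallyEq <|
        hnear.mono fun s hs => by simp only [← hs, Complex.ofReal_re]
    rw [iteratedDeriv_succ, hre.deriv]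
    exact hre.ofReal_comp.unique (hG.comp_ofReal.congr_of_eventuallyEq hnear)

namespace Complex

theorem closedBall_ofReal_subset_slitPlane {x r : ℝ} (hr : r < x) :
    closedBall (x : ℂ) r ⊆ slitPlane := fun z hz => by
  have hre := abs_re_le_norm (z - x)
  rw [sub_re, ofReal_re] at hre
  rw [mem_closedBall, dist_eq_norm] at hz
  exact Or.inl (by linarith [abs_le.mp hre])

theorem abs_arg_le_of_norm_sub_ofReal_le {x σ : ℝ} {z : ℂ} (hx : 0 < x) (hσ₀ : 0 ≤ σ)
    (hσ : σ ≤ π / 2) (hz : ‖z - x‖ ≤ x * Real.sin σ) : |arg z| ≤ σ := by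
  have hsinσ : 0 ≤ Real.sin σ := Real.sin_nonneg_of_nonneg_of_le_pi hσ₀ (by linarith [pi_pos])
  have hre : 0 ≤ z.re := by
    have := abs_re_le_norm (z - x)
    rw [sub_re, ofReal_re] at this
    nlinarith [abs_le.mp this, Real.sin_le_one σ]
  have harg : |arg z| ≤ π / 2 := abs_arg_le_pi_div_two_iff.mpr hre
  have hsin : |Real.sin (arg z)| ≤ Real.sin σ := by
    -- `x |sin (arg z)|` is the distance from `x` to the ray through `z`
    have hdist : ‖z - x‖ ^ 2 = (‖z‖ - x * Real.cos (arg z)) ^ 2 + (x * Real.sin (arg z)) ^ 2 := by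
      rw [Complex.sq_norm, normSq_apply, sub_re, sub_im, ofReal_re, ofReal_im,
        ← norm_mul_cos_arg, ← norm_mul_sin_arg]
      linear_combination (‖z‖ ^ 2 - x ^ 2) * Real.sin_sq_add_cos_sq (arg z)
    have : x ^ 2 * Real.sin (arg z) ^ 2 ≤ x ^ 2 * Real.sin σ ^ 2 := by
      nlinarith [sq_nonneg (‖z‖ - x * Real.cos (arg z)), pow_le_pow_left₀ (norm_nonneg _) hz 2]
    exact abs_le.mpr (abs_le_of_sq_le_sq' (le_of_mul_le_mul_left this (by positivity)) hsinσ)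
  by_contra! hlt
  have := Real.sin_lt_sin_of_lt_of_le_pi_div_two (by linarith) harg hlt
  rw [← Real.abs_sin_eq_sin_abs_of_abs_le_pi (by linarith [pi_pos])] at this
  linarith

end Complex

noncomputable def expNegCpow (c p : ℝ) (z : ℂ) : ℂ :=
  Complex.exp (-(c : ℂ) * z ^ ((-p : ℝ) : ℂ))

theorem ofReal_exp_neg_mul_rpow_neg {c p t : ℝ} (ht : 0 ≤ t) :
    ((rexp (-c * t ^ (-p)) : ℝ) : ℂ) = expNegCpow c p t := by
  rw [expNegCpow, Complex.ofReal_exp, Complex.ofReal_mul, Complex.ofReal_cpow ht,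
    Complex.ofReal_neg]

theorem differentiableOn_expNegCpow (c p : ℝ) :
    DifferentiableOn ℂ (expNegCpow c p) Complex.slitPlane := fun _ hz =>
  ((differentiableAt_id.cpow (differentiableAt_const _) hz).const_mul _).cexp.differentiableWithinAt

theorem norm_expNegCpow_le {c p R : ℝ} {z : ℂ} (hc : 0 ≤ c) (hp : 0 ≤ p) (hz : z ≠ 0)
    (hzR : ‖z‖ ≤ R) (harg : p * |Complex.arg z| ≤ π / 4) :
    ‖expNegCpow (c * √2) p z‖ ≤ rexp (-(c * R ^ (-p))) := by
  have hcos : √2 / 2 ≤ Real.cos (Complex.arg z * -p) := by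
    rw [← cos_pi_div_four, ← cos_abs (_ * _), abs_mul, abs_neg, abs_of_nonneg hp, mul_comm]
    exact cos_le_cos_of_nonneg_of_le_pi (by positivity) (by linarith [pi_pos]) harg
  have hpow : R ^ (-p) ≤ ‖z‖ ^ (-p) :=
    rpow_le_rpow_of_nonpos (norm_pos_iff.mpr hz) hzR (neg_nonpos.mpr hp)
  rw [expNegCpow, Complex.norm_exp, ← Complex.ofReal_neg, Complex.re_ofReal_mul,
    Complex.cpow_ofReal_re, exp_le_exp, neg_mul, neg_le_neg_iff]
  calc c * R ^ (-p) = c * √2 * (R ^ (-p) * (√2 / 2)) := by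
        field_simp; rw [sq_sqrt zero_le_two]
    _ ≤ c * √2 * (‖z‖ ^ (-p) * Real.cos (Complex.arg z * -p)) := by gcongr

theorem norm_expNegCpow_le_of_norm_sub_ofReal_le {c p x σ : ℝ} {z : ℂ} (hc : 0 ≤ c) (hp : 0 ≤ p)
    (hx : 0 < x) (hσ₀ : 0 ≤ σ) (hσ : σ ≤ π / 2) (hpσ : p * σ ≤ π / 4) (hz₀ : z ≠ 0)
    (hz : ‖z - x‖ ≤ x * Real.sin σ) :
    ‖expNegCpow (c * √2) p z‖ ≤ rexp (-(c * (2 * x) ^ (-p))) := by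
  refine norm_expNegCpow_le hc hp hz₀ ?_ ?_
  · calc ‖z‖ ≤ ‖(x : ℂ)‖ + ‖z - x‖ := norm_le_insert' z x
      _ ≤ 2 * x := by rw [Complex.norm_of_nonneg hx.le]; nlinarith [Real.sin_le_one σ]
  · calc p * |Complex.arg z| ≤ p * σ := by
          gcongr; exact Complex.abs_arg_le_of_norm_sub_ofReal_le hx hσ₀ hσ hz
      _ ≤ π / 4 := hpσ

theorem norm_iteratedDeriv_expNegCpow_le {c p x σ : ℝ} (hc : 0 ≤ c) (hp : 0 ≤ p) (hx : 0 < x)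
    (hσ₀ : 0 < σ) (hσ : σ < π / 2) (hpσ : p * σ ≤ π / 4) (k : ℕ) :
    ‖iteratedDeriv k (expNegCpow (c * √2) p) x‖ ≤
      k.factorial * rexp (-(c * (2 * x) ^ (-p))) / (x * Real.sin σ) ^ k := by
  have hsin : 0 < Real.sin σ := sin_pos_of_pos_of_lt_pi hσ₀ (by linarith)
  have hsin₁ : Real.sin σ < 1 := by
    simpa using sin_lt_sin_of_lt_of_le_pi_div_two (by linarith) le_rfl hσ
  have hball := Complex.closedBall_ofReal_subset_slitPlane (mul_lt_of_lt_one_right hx hsin₁)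
  refine Complex.norm_iteratedDeriv_le_of_forall_mem_sphere_norm_le k (by positivity)
    ((differentiableOn_expNegCpow _ p).diffContOnCl_ball hball) fun z hz => ?_
  have hz₀ := Complex.slitPlane_ne_zero (hball (sphere_subset_closedBall hz))
  rw [mem_sphere_iff_norm] at hz
  exact norm_expNegCpow_le_of_norm_sub_ofReal_le hc hp hx hσ₀.le hσ.le hpσ hz₀ hz.le

/-- Cauchy-type derivative bounds for `f_λ(x) = exp(-λ√2·x^{-p})` (for `x > 0`,
extended by `0` for `x ≤ 0`): for every `k ∈ ℕ` and `x > 0`,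
`|f_λ^{(k)}(x)| ≤ (2/sin σ)^k·(k/(λpe))^{k/p}·k!` with `σ = (π/4)·min{1,1/p}`. -/
theorem iteratedDeriv_f_lambda_bound
    (p lam : ℝ) (hp : 0 < p) (hlam : 0 < lam)
    (σ : ℝ) (hσ : σ = (Real.pi / 4) * min 1 (1 / p))
    (f : ℝ → ℝ)
    (hf : ∀ x : ℝ, f x = if 0 < x then Real.exp (-(lam * Real.sqrt 2) * x ^ (-p)) else 0) :
    ∀ (k : ℕ) (x : ℝ), 0 < x →
      |iteratedDeriv k f x| ≤
        (2 / Real.sin σ) ^ k * ((k : ℝ) / (lam * p * Real.exp 1)) ^ ((k : ℝ) / p)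
          * (k.factorial : ℝ) := by
  intro k x hx
  have hσ₀ : 0 < σ := by rw [hσ]; positivity
  have hσπ : σ < π / 2 := by rw [hσ]; nlinarith [min_le_left 1 (1 / p), pi_pos]
  have hpσ : p * σ ≤ π / 4 := by
    calc p * σ ≤ p * (π / 4 * (1 / p)) := by rw [hσ]; gcongr; exact min_le_right _ _
      _ = π / 4 := by field_simp
  have hsin : 0 < sin σ := sin_pos_of_pos_of_lt_pi hσ₀ (by linarith)
  have hext : ((iteratedDeriv k f x : ℝ) : ℂ) = iteratedDeriv k (expNegCpow (lam * √2) p) x :=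
    ofReal_iteratedDeriv_eq_iteratedDeriv Complex.isOpen_slitPlane
      (differentiableOn_expNegCpow _ p)
      (fun t ht => by
        rw [hf, if_pos (Complex.ofReal_mem_slitPlane.1 ht),
          ofReal_exp_neg_mul_rpow_neg (Complex.ofReal_mem_slitPlane.1 ht).le])
      k x (Complex.ofReal_mem_slitPlane.2 hx)
  have h2x : 0 < 2 * x := by positivity
  have hsup : rexp (-(lam * (2 * x) ^ (-p))) ≤
      (2 * x) ^ k * ((k : ℝ) / (lam * p * rexp 1)) ^ ((k : ℝ) / p) := by
    have := rpow_mul_exp_neg_mul_rpow_le hp hlam (Nat.cast_nonneg k) (inv_pos.2 h2x)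
    rwa [inv_rpow h2x.le, inv_rpow h2x.le, ← rpow_neg h2x.le p, rpow_natCast,
      inv_mul_le_iff₀ (by positivity)] at this
  calc |iteratedDeriv k f x| = ‖iteratedDeriv k (expNegCpow (lam * √2) p) x‖ := by
        rw [← hext, Complex.norm_real, norm_eq_abs]
    _ ≤ k.factorial * rexp (-(lam * (2 * x) ^ (-p))) / (x * sin σ) ^ k :=
        norm_iteratedDeriv_expNegCpow_le hlam.le hp.le hx hσ₀ hσπ hpσ k
    _ ≤ k.factorial * ((2 * x) ^ k * ((k : ℝ) / (lam * p * rexp 1)) ^ ((k : ℝ) / p)) /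
          (x * sin σ) ^ k := by gcongr
    _ = _ := by rw [mul_pow, mul_pow, div_pow]; field_simp
end

section
/- For every α > 1 and every L > 0, there exists λ > 0 such that the function f_λ (equal to 0 for x ≤ 0 and exp(-λ√2·x^{-1/(α-1)}) for x > 0) satisfies Σ_{k∈ℕ} (L^{kα}/(k!)^α)·sup_{x∈ℝ}|f_λ^{(k)}(x)| < ∞; that is, f_λ is a Gevrey-α function on ℝ. -/
/-!
For `x > 0` the `k`-th derivative of `exp (-c x^(-p))` is `Q_k(u) x^(-k) e^(-u)`, where
`u = c x^(-p)` and `Q_k` is a polynomial of degree `≤ k` given by a first-order recursion. These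
expressions tend to `0` at `0⁺`, so the glued function has all derivatives vanishing on `x ≤ 0`.
Splitting `e^(-u) = e^(-u/2) e^(-u/2)`, one half absorbs `Q_k(u)` at the cost of a weighted
coefficient norm `≤ (3p+1)^k k!`, the other absorbs `x^(-k) = (u/c)^(k/p)` at the cost of
`(2k/(cpe))^(k/p) ≤ (2/(cp))^(k/p) (k!)^(1/p)`. Hence `|f^(k)| ≤ M^k (k!)^(1+1/p)` with
`M = (3p+1)(2/(cp))^(1/p)`, and as `α = 1 + 1/p` the Gevrey series is dominated by
`∑ (L^α M)^k`, which converges once `c = λ√2` is so large that `L^α M = 1/2`.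
-/

open Real Filter Topology Polynomial Finset
open scoped Nat

lemma rpow_mul_exp_neg_le_s6 {q w : ℝ} (hq : 0 ≤ q) (hw : 0 ≤ w) :
    w ^ q * exp (-w) ≤ (q / exp 1) ^ q := by
  rcases hq.eq_or_lt with rfl | hq
  · simpa using hw
  have hbase : w * exp (-(w / q)) ≤ q / exp 1 := by
    have h := mul_le_mul_of_nonneg_left (mul_exp_neg_le_exp_neg_one (w / q)) hq.le
    rwa [← mul_assoc, mul_div_cancel₀ _ hq.ne', exp_neg 1, ← div_eq_mul_inv] at h
  calc w ^ q * exp (-w) = (w * exp (-(w / q))) ^ q := by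
        rw [mul_rpow hw (exp_pos _).le, ← exp_mul, neg_mul, div_mul_cancel₀ _ hq.ne']
    _ ≤ (q / exp 1) ^ q := by gcongr

lemma pow_div_exp_le_factorial (k : ℕ) : ((k : ℝ) / exp 1) ^ k ≤ k ! := by
  have h := pow_div_factorial_le_exp (k : ℝ) k.cast_nonneg k
  rw [div_le_iff₀ (by positivity), ← exp_one_pow] at h
  rw [div_pow, div_le_iff₀ (by positivity)]
  linarith

lemma tsum_gevrey_lt_top {α L M : ℝ} (hL : 0 ≤ L) (hM : 0 ≤ M) (hLM : L ^ α * M < 1)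
    (g : ℕ → ℝ → ℝ) (hg : ∀ k x, |g k x| ≤ M ^ k * (k ! : ℝ) ^ α) :
    ∑' k : ℕ, ENNReal.ofReal (L ^ ((k : ℝ) * α) / (k ! : ℝ) ^ α) *
      ⨆ x, ENNReal.ofReal |g k x| < ⊤ := by
  set r := L ^ α * M
  have hterm (k : ℕ) : ENNReal.ofReal (L ^ ((k : ℝ) * α) / (k ! : ℝ) ^ α) *
      ⨆ x, ENNReal.ofReal |g k x| ≤ ENNReal.ofReal r ^ k := by
    calc ENNReal.ofReal (L ^ ((k : ℝ) * α) / (k ! : ℝ) ^ α) * ⨆ x, ENNReal.ofReal |g k x|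
        ≤ ENNReal.ofReal (L ^ ((k : ℝ) * α) / (k ! : ℝ) ^ α) *
            ENNReal.ofReal (M ^ k * (k ! : ℝ) ^ α) := by
          gcongr
          exact iSup_le fun x => ENNReal.ofReal_le_ofReal (hg k x)
      _ = ENNReal.ofReal r ^ k := by
          rw [← ENNReal.ofReal_mul (by positivity), ← ENNReal.ofReal_pow (by positivity),
            mul_comm (k : ℝ), rpow_mul hL, rpow_natCast, mul_pow]
          congr 1
          field_simp
  calc _ ≤ ∑' k : ℕ, ENNReal.ofReal r ^ k := ENNReal.tsum_le_tsum hterm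
    _ = (1 - ENNReal.ofReal r)⁻¹ := ENNReal.tsum_geometric _
    _ < ⊤ := ENNReal.inv_lt_top.2 (tsub_pos_iff_lt.2 (ENNReal.ofReal_lt_one.2 hLM))

namespace ExpNegRpow

/-- `Q_k = derivPoly p k` satisfies
`(d/dx)^k exp (-c x^(-p)) = Q_k(c x^(-p)) x^(-k) exp (-c x^(-p))` for `x > 0`. -/
noncomputable def derivPoly (p : ℝ) : ℕ → ℝ[X]
  | 0 => 1
  | k + 1 =>
    p • (X * derivPoly p k - X * derivative (derivPoly p k)) - (k : ℝ) • derivPoly p k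

lemma natDegree_derivPoly_le (p : ℝ) (k : ℕ) : (derivPoly p k).natDegree ≤ k := by
  induction k with
  | zero => simp [derivPoly]
  | succ k ih =>
    have hX (Q : ℝ[X]) (hQ : Q.natDegree ≤ k) : (X * Q).natDegree ≤ k + 1 :=
      natDegree_mul_le.trans (by rw [natDegree_X]; omega)
    have hQ' : (derivative (derivPoly p k)).natDegree ≤ k :=
      (natDegree_derivative_le _).trans (by omega)
    refine (natDegree_sub_le _ _).trans (max_le ((natDegree_smul_le _ _).trans
      ((natDegree_sub_le _ _).trans (max_le (hX _ ih) (hX _ hQ')))) ?_)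
    exact (natDegree_smul_le _ _).trans (by omega)

-- The weights `2 ^ j * j !` bound `u ^ j * exp (-(u / 2))` on `u ≥ 0`.
noncomputable def coeffNorm (n : ℕ) (Q : ℝ[X]) : ℝ :=
  ∑ j ∈ range n, |Q.coeff j| * 2 ^ j * j !

lemma coeffNorm_nonneg (n : ℕ) (Q : ℝ[X]) : 0 ≤ coeffNorm n Q :=
  sum_nonneg fun _ _ => by positivity

lemma coeffNorm_sub_le (n : ℕ) (P Q : ℝ[X]) :
    coeffNorm n (P - Q) ≤ coeffNorm n P + coeffNorm n Q := by
  rw [coeffNorm, coeffNorm, coeffNorm, ← sum_add_distrib]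
  refine sum_le_sum fun j _ => ?_
  rw [coeff_sub, ← add_mul, ← add_mul]
  gcongr
  exact abs_sub _ _

lemma coeffNorm_smul (n : ℕ) (a : ℝ) (Q : ℝ[X]) :
    coeffNorm n (a • Q) = |a| * coeffNorm n Q := by
  simp only [coeffNorm, coeff_smul, smul_eq_mul, abs_mul, mul_sum, mul_assoc]

lemma coeffNorm_X_mul_le (n : ℕ) (Q : ℝ[X]) :
    coeffNorm (n + 1) (X * Q) ≤ 2 * n * coeffNorm n Q := by
  rw [coeffNorm, sum_range_succ', coeff_X_mul_zero, abs_zero, zero_mul, zero_mul, add_zero,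
    coeffNorm, mul_sum]
  refine sum_le_sum fun j hj => ?_
  have hjn : ((j + 1 : ℕ) : ℝ) ≤ n := by exact_mod_cast mem_range.1 hj
  rw [coeff_X_mul, Nat.factorial_succ, pow_succ]
  push_cast at hjn ⊢
  nlinarith [show 0 ≤ |Q.coeff j| * 2 ^ j * (j ! : ℝ) by positivity]

lemma coeffNorm_X_mul_derivative_le (n : ℕ) (Q : ℝ[X]) :
    coeffNorm (n + 1) (X * derivative Q) ≤ n * coeffNorm (n + 1) Q := by
  rw [coeffNorm, coeffNorm, mul_sum]
  refine sum_le_sum fun j hj => ?_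
  have hjn : (j : ℝ) ≤ n := by exact_mod_cast Nat.lt_succ_iff.1 (mem_range.1 hj)
  have hcoeff : (X * derivative Q).coeff j = j * Q.coeff j := by
    cases j with
    | zero => simp
    | succ j => rw [coeff_X_mul, coeff_derivative]; push_cast; ring
  rw [hcoeff, abs_mul, Nat.abs_cast]
  nlinarith [show 0 ≤ |Q.coeff j| * 2 ^ j * (j ! : ℝ) by positivity]

lemma coeffNorm_succ_of_natDegree_lt {n : ℕ} {Q : ℝ[X]} (hQ : Q.natDegree < n) :
    coeffNorm (n + 1) Q = coeffNorm n Q := by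
  rw [coeffNorm, sum_range_succ, coeff_eq_zero_of_natDegree_lt hQ]
  simp [coeffNorm]

lemma coeffNorm_derivPoly_le {p : ℝ} (hp : 0 ≤ p) (k : ℕ) :
    coeffNorm (k + 1) (derivPoly p k) ≤ (3 * p + 1) ^ k * k ! := by
  induction k with
  | zero => simp [coeffNorm, derivPoly]
  | succ k ih =>
    set Q := derivPoly p k
    have hN : coeffNorm (k + 2) Q = coeffNorm (k + 1) Q :=
      coeffNorm_succ_of_natDegree_lt (Nat.lt_succ_of_le (natDegree_derivPoly_le p k))
    calc coeffNorm (k + 2) (derivPoly p (k + 1))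
        ≤ p * (coeffNorm (k + 2) (X * Q) + coeffNorm (k + 2) (X * derivative Q))
            + k * coeffNorm (k + 2) Q := by
          refine (coeffNorm_sub_le _ _ _).trans ?_
          rw [coeffNorm_smul, coeffNorm_smul, abs_of_nonneg hp, Nat.abs_cast]
          gcongr
          exact coeffNorm_sub_le _ _ _
      _ ≤ p * (2 * (k + 1) * coeffNorm (k + 1) Q + (k + 1) * coeffNorm (k + 2) Q)
            + k * coeffNorm (k + 2) Q := by
          gcongr
          · exact_mod_cast coeffNorm_X_mul_le (k + 1) Q
          · exact_mod_cast coeffNorm_X_mul_derivative_le (k + 1) Q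
      _ ≤ (k + 1) * (3 * p + 1) * coeffNorm (k + 1) Q := by
          rw [hN]; nlinarith [coeffNorm_nonneg (k + 1) Q]
      _ ≤ (k + 1) * (3 * p + 1) * ((3 * p + 1) ^ k * k !) := by gcongr
      _ = (3 * p + 1) ^ (k + 1) * (k + 1)! := by
          rw [Nat.factorial_succ]; push_cast; ring

lemma abs_eval_mul_exp_neg_half_le {n : ℕ} {Q : ℝ[X]} (hQ : Q.natDegree < n) {u : ℝ}
    (hu : 0 ≤ u) : |Q.eval u| * exp (-(u / 2)) ≤ coeffNorm n Q := by
  rw [eval_eq_sum_range' hQ, coeffNorm]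
  refine (mul_le_mul_of_nonneg_right (abs_sum_le_sum_abs _ _) (exp_pos _).le).trans ?_
  rw [sum_mul]
  refine sum_le_sum fun j _ => ?_
  have hpow : (u / 2) ^ j * exp (-(u / 2)) ≤ j ! := by
    have h := pow_div_factorial_le_exp (u / 2) (by positivity) j
    rw [div_le_iff₀ (by positivity)] at h
    calc (u / 2) ^ j * exp (-(u / 2)) ≤ exp (u / 2) * j ! * exp (-(u / 2)) := by gcongr
      _ = j ! := by rw [mul_right_comm, ← exp_add, add_neg_cancel, exp_zero, one_mul]
  calc |Q.coeff j * u ^ j| * exp (-(u / 2))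
      = |Q.coeff j| * 2 ^ j * ((u / 2) ^ j * exp (-(u / 2))) := by
        rw [abs_mul, abs_of_nonneg (pow_nonneg hu j), div_pow]; field_simp
    _ ≤ |Q.coeff j| * 2 ^ j * j ! := by gcongr

noncomputable def kthDeriv (c p : ℝ) (k : ℕ) (x : ℝ) : ℝ :=
  if x ≤ 0 then 0
  else (derivPoly p k).eval (c * x ^ (-p)) * x ^ (-(k : ℝ)) * exp (-(c * x ^ (-p)))

lemma kthDeriv_zero (c p : ℝ) :
    kthDeriv c p 0 = fun x => if x ≤ 0 then 0 else exp (-c * x ^ (-p)) := by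
  funext x
  simp [kthDeriv, derivPoly]

lemma hasDerivAt_kthDeriv_of_pos (c p : ℝ) (k : ℕ) {x : ℝ} (hx : 0 < x) :
    HasDerivAt (kthDeriv c p k) (kthDeriv c p (k + 1) x) x := by
  set Q := derivPoly p k
  have hu : HasDerivAt (fun x => c * x ^ (-p)) (c * (-p * x ^ (-p - 1))) x :=
    (hasDerivAt_rpow_const (Or.inl hx.ne')).const_mul c
  have hpow : HasDerivAt (fun x => x ^ (-(k : ℝ))) (-(k : ℝ) * x ^ (-(k : ℝ) - 1)) x :=
    hasDerivAt_rpow_const (Or.inl hx.ne')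
  have hF := (((Q.hasDerivAt _).comp x hu).mul hpow).mul hu.neg.exp
  have hev : kthDeriv c p k =ᶠ[𝓝 x]
      fun x => Q.eval (c * x ^ (-p)) * x ^ (-(k : ℝ)) * exp (-(c * x ^ (-p))) := by
    filter_upwards [Ioi_mem_nhds hx] with t ht
    exact if_neg (not_le.2 ht)
  refine (hF.congr_of_eventuallyEq hev).congr_deriv ?_
  simp only [kthDeriv, if_neg (not_le.2 hx), derivPoly, Function.comp_apply, Pi.mul_apply,
    Pi.neg_apply, eval_sub, eval_smul, eval_mul, eval_X, smul_eq_mul]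
  rw [rpow_sub_one hx.ne', rpow_sub_one hx.ne',
    show -((k + 1 : ℕ) : ℝ) = -(k : ℝ) - 1 by push_cast; ring, rpow_sub_one hx.ne']
  field_simp
  ring

lemma tendsto_rpow_mul_exp_neg_rpow {c p : ℝ} (hc : 0 < c) (hp : 0 < p) (s : ℝ) :
    Tendsto (fun t => t ^ s * exp (-(c * t ^ (-p)))) (𝓝[>] 0) (𝓝 0) := by
  have h := (tendsto_rpow_mul_exp_neg_mul_atTop_nhds_zero (-(s / p)) c hc).comp
    (tendsto_rpow_neg_nhdsGT_zero (neg_lt_zero.2 hp))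
  refine h.congr' ?_
  filter_upwards [self_mem_nhdsWithin] with t (ht : 0 < t)
  rw [Function.comp_apply, ← rpow_mul ht.le, neg_mul c, show -p * -(s / p) = s by field_simp]

lemma tendsto_kthDeriv_div_self {c p : ℝ} (hc : 0 < c) (hp : 0 < p) (k : ℕ) :
    Tendsto (fun t => kthDeriv c p k t / t) (𝓝[>] 0) (𝓝 0) := by
  set N := coeffNorm (k + 1) (derivPoly p k)
  have hlim := (tendsto_rpow_mul_exp_neg_rpow (half_pos hc) hp (-(k : ℝ) - 1)).const_mul N
  rw [mul_zero] at hlim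
  refine squeeze_zero_norm' ?_ hlim
  filter_upwards [self_mem_nhdsWithin] with t (ht : 0 < t)
  set u := c * t ^ (-p)
  have hQ : |(derivPoly p k).eval u| * exp (-(u / 2)) ≤ N :=
    abs_eval_mul_exp_neg_half_le (Nat.lt_succ_of_le (natDegree_derivPoly_le p k)) (by positivity)
  have hsplit : exp (-u) = exp (-(u / 2)) * exp (-(c / 2 * t ^ (-p))) := by
    rw [← exp_add]; congr 1; simp only [u]; ring
  rw [kthDeriv, if_neg (not_le.2 ht), Real.norm_eq_abs, abs_div, abs_of_pos ht, abs_mul, abs_mul,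
    abs_of_pos (exp_pos _), abs_of_pos (rpow_pos_of_pos ht _), rpow_sub_one ht.ne', hsplit]
  calc |(derivPoly p k).eval u| * t ^ (-(k : ℝ)) *
        (exp (-(u / 2)) * exp (-(c / 2 * t ^ (-p)))) / t
      = (|(derivPoly p k).eval u| * exp (-(u / 2))) *
          (t ^ (-(k : ℝ)) / t * exp (-(c / 2 * t ^ (-p)))) := by ring
    _ ≤ N * (t ^ (-(k : ℝ)) / t * exp (-(c / 2 * t ^ (-p)))) := by gcongr

lemma hasDerivAt_kthDeriv {c p : ℝ} (hc : 0 < c) (hp : 0 < p) (k : ℕ) (x : ℝ) :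
    HasDerivAt (kthDeriv c p k) (kthDeriv c p (k + 1) x) x := by
  rcases lt_trichotomy x 0 with hx | rfl | hx
  · have hev : kthDeriv c p k =ᶠ[𝓝 x] fun _ => 0 := by
      filter_upwards [Iio_mem_nhds hx] with t ht
      exact if_pos ht.le
    rw [kthDeriv, if_pos hx.le]
    exact (hasDerivAt_const x 0).congr_of_eventuallyEq hev
  · have hzero (j : ℕ) : kthDeriv c p j 0 = 0 := if_pos le_rfl
    rw [hzero, hasDerivAt_iff_tendsto_slope, ← nhdsLT_sup_nhdsGT, tendsto_sup]
    constructor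
    · refine tendsto_const_nhds.congr' ?_
      filter_upwards [self_mem_nhdsWithin] with t (ht : t < 0)
      simp [slope_def_field, kthDeriv, ht.le]
    · refine (tendsto_kthDeriv_div_self hc hp k).congr' ?_
      filter_upwards with t
      simp [slope_def_field, hzero]
  · exact hasDerivAt_kthDeriv_of_pos c p k hx

lemma iteratedDeriv_kthDeriv_zero {c p : ℝ} (hc : 0 < c) (hp : 0 < p) (k : ℕ) :
    iteratedDeriv k (kthDeriv c p 0) = kthDeriv c p k := by
  induction k with
  | zero => rfl
  | succ k ih =>
    funext x
    rw [iteratedDeriv_succ, ih, (hasDerivAt_kthDeriv hc hp k x).deriv]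

lemma abs_kthDeriv_le {c p : ℝ} (hc : 0 < c) (hp : 0 < p) (k : ℕ) (x : ℝ) :
    |kthDeriv c p k x| ≤ (3 * p + 1) ^ k * k ! * (2 / c * (k / p) / exp 1) ^ ((k : ℝ) / p) := by
  rcases le_or_gt x 0 with hx | hx
  · rw [kthDeriv, if_pos hx, abs_zero]
    positivity
  set q : ℝ := k / p
  set u := c * x ^ (-p)
  have hu : 0 ≤ u := by positivity
  have hQ : |(derivPoly p k).eval u| * exp (-(u / 2)) ≤ (3 * p + 1) ^ k * k ! :=
    (abs_eval_mul_exp_neg_half_le (Nat.lt_succ_of_le (natDegree_derivPoly_le p k)) hu).trans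
      (coeffNorm_derivPoly_le hp.le k)
  have hxk : x ^ (-(k : ℝ)) = (2 / c) ^ q * (u / 2) ^ q := by
    rw [← mul_rpow (by positivity) (by positivity),
      show 2 / c * (u / 2) = x ^ (-p) by simp only [u]; field_simp, ← rpow_mul hx.le]
    congr 1
    simp only [q]; field_simp
  have hsplit : exp (-u) = exp (-(u / 2)) * exp (-(u / 2)) := by rw [← exp_add]; ring_nf
  rw [kthDeriv, if_neg (not_le.2 hx), abs_mul, abs_mul, abs_of_pos (exp_pos _),
    abs_of_pos (rpow_pos_of_pos hx _), hxk, hsplit]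
  calc |(derivPoly p k).eval u| * ((2 / c) ^ q * (u / 2) ^ q) * (exp (-(u / 2)) * exp (-(u / 2)))
      = (|(derivPoly p k).eval u| * exp (-(u / 2))) *
          ((2 / c) ^ q * ((u / 2) ^ q * exp (-(u / 2)))) := by ring
    _ ≤ ((3 * p + 1) ^ k * k !) * ((2 / c) ^ q * (q / exp 1) ^ q) := by
        gcongr
        exact rpow_mul_exp_neg_le_s6 (by positivity) (by positivity)
    _ = (3 * p + 1) ^ k * k ! * (2 / c * q / exp 1) ^ q := by
        rw [← mul_rpow (by positivity) (by positivity), mul_div_assoc]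

lemma abs_iteratedDeriv_le {c p : ℝ} (hc : 0 < c) (hp : 0 < p) (k : ℕ) (x : ℝ) :
    |iteratedDeriv k (kthDeriv c p 0) x|
      ≤ ((3 * p + 1) * (2 / (c * p)) ^ (1 / p)) ^ k * (k ! : ℝ) ^ (1 + 1 / p) := by
  have hbase : (2 / c * (k / p) / exp 1) ^ ((k : ℝ) / p)
      = ((2 / (c * p)) ^ k * (k / exp 1) ^ k) ^ (1 / p) := by
    rw [← mul_pow, ← rpow_natCast, ← rpow_mul (by positivity)]
    congr 1 <;> field_simp
  rw [iteratedDeriv_kthDeriv_zero hc hp]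
  refine (abs_kthDeriv_le hc hp k x).trans ?_
  rw [hbase]
  calc (3 * p + 1) ^ k * k ! * ((2 / (c * p)) ^ k * (k / exp 1) ^ k) ^ (1 / p)
      ≤ (3 * p + 1) ^ k * k ! * ((2 / (c * p)) ^ k * k !) ^ (1 / p) := by
        gcongr
        exact pow_div_exp_le_factorial k
    _ = ((3 * p + 1) * (2 / (c * p)) ^ (1 / p)) ^ k * (k ! : ℝ) ^ (1 + 1 / p) := by
        rw [mul_rpow (by positivity) (by positivity), rpow_add (by positivity), rpow_one,
          ← rpow_pow_comm (by positivity), mul_pow]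
        ring

end ExpNegRpow

open ExpNegRpow in
/-- for every `α > 1` and `L > 0` there is `λ > 0` such that the Gevrey norm
`Σ_k (L^{kα}/(k!)^α)·sup_{x∈ℝ}|f_λ^{(k)}(x)|` of the function `f_λ`
(`0` for `x ≤ 0`, `exp(-λ√2·x^{-1/(α-1)})` for `x > 0`) is finite. -/
theorem f_lambda_gevrey (α L : ℝ) (hα : 1 < α) (hL : 0 < L) :
    ∃ lam : ℝ, 0 < lam ∧
      (∑' k : ℕ, ENNReal.ofReal (L ^ ((k : ℝ) * α) / (k.factorial : ℝ) ^ α) *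
        ⨆ x : ℝ, ENNReal.ofReal
          |iteratedDeriv k (fun t : ℝ =>
            if t ≤ 0 then 0 else Real.exp (-(lam * Real.sqrt 2) * t ^ (-(1 / (α - 1))))) x|)
        < ⊤ := by
  set p := 1 / (α - 1)
  have hp : 0 < p := one_div_pos.2 (sub_pos.2 hα)
  have hα_eq : α = 1 + 1 / p := by simp only [p, one_div_one_div]; ring
  set B := 2 * L ^ α * (3 * p + 1)
  have hB : 0 < B := by positivity
  set c := 2 / p * B ^ p
  have hc : 0 < c := by positivity
  have hM : (3 * p + 1) * (2 / (c * p)) ^ (1 / p) = 1 / (2 * L ^ α) := by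
    rw [show 2 / (c * p) = (B ^ p)⁻¹ by simp only [c]; field_simp, inv_rpow (by positivity),
      one_div p, rpow_rpow_inv hB.le hp.ne']
    simp only [B]; field_simp
  refine ⟨c / sqrt 2, by positivity, ?_⟩
  rw [div_mul_cancel₀ _ (by positivity), ← kthDeriv_zero c p]
  refine tsum_gevrey_lt_top (M := (3 * p + 1) * (2 / (c * p)) ^ (1 / p)) hL.le (by positivity)
    ?_ _ fun k x => ?_
  · rw [hM]; field_simp; norm_num
  · rw [hα_eq]; exact abs_iteratedDeriv_le hc hp k x
end

section
/- Let h(x,x') = ½(x-x')² + u(x') + v(x') where u, v ≥ 0, and suppose: (x_i) is a minimal configuration for h̄(x,x') = ½(x-x')² + u(x') with v(x_i) = 0 for all i; (ξ_i) and (z_i) are configurations with ξ_0 = η. If (z_i) minimizes Σ_i h(z_i,z_{i+1}) - Σ_i h̄(x_i,x_{i+1}) in the sense that Σ_i h(z_i,z_{i+1}) ≤ Σ_i h(x_i,x_{i+1}) (all sums taken as well-defined differences against the reference configuration), then Σ_i (h(ξ_i,ξ_{i+1}) - h(z_i,z_{i+1})) ≥ v(η). -/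
open Real

/-- lower bound for the Peierls barrier difference. With
`h̄(x,x') = ½(x-x')² + u(x')` and `h(x,x') = ½(x-x')² + u(x') + v(x')`, if `(x_i)` is
minimal for `h̄` (compared against `(ξ_i)`), `v(x_i) = 0` for all `i`, `ξ_0 = η`, and
`(z_i)` satisfies `Σ h(z) ≤ Σ h(x)` (differences against the reference configuration
being absolutely convergent), then `Σ (h(ξ_i,ξ_{i+1}) - h(z_i,z_{i+1})) ≥ v(η)`. -/
theorem peierls_barrier_lower_bound
    (u v : ℝ → ℝ) (hu : ∀ t, 0 ≤ u t) (hv : ∀ t, 0 ≤ v t)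
    (x ξ z : ℤ → ℝ) (η : ℝ)
    (hvx : ∀ i : ℤ, v (x i) = 0) (hξ0 : ξ 0 = η)
    (hmin_sum : Summable (fun i : ℤ =>
      ((ξ i - ξ (i + 1)) ^ 2 / 2 + u (ξ (i + 1)))
        - ((x i - x (i + 1)) ^ 2 / 2 + u (x (i + 1)))))
    (hmin : 0 ≤ ∑' i : ℤ,
      (((ξ i - ξ (i + 1)) ^ 2 / 2 + u (ξ (i + 1)))
        - ((x i - x (i + 1)) ^ 2 / 2 + u (x (i + 1)))))
    (hz_sum : Summable (fun i : ℤ =>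
      ((z i - z (i + 1)) ^ 2 / 2 + u (z (i + 1)) + v (z (i + 1)))
        - ((x i - x (i + 1)) ^ 2 / 2 + u (x (i + 1)) + v (x (i + 1)))))
    (hz : (∑' i : ℤ,
      (((z i - z (i + 1)) ^ 2 / 2 + u (z (i + 1)) + v (z (i + 1)))
        - ((x i - x (i + 1)) ^ 2 / 2 + u (x (i + 1)) + v (x (i + 1))))) ≤ 0)
    (hsv : Summable (fun i : ℤ => v (ξ (i + 1)))) :
    v η ≤ ∑' i : ℤ,
      (((ξ i - ξ (i + 1)) ^ 2 / 2 + u (ξ (i + 1)) + v (ξ (i + 1)))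
        - ((z i - z (i + 1)) ^ 2 / 2 + u (z (i + 1)) + v (z (i + 1)))) := by
  set f : ℤ → ℝ := fun i =>
    ((ξ i - ξ (i + 1)) ^ 2 / 2 + u (ξ (i + 1)))
      - ((x i - x (i + 1)) ^ 2 / 2 + u (x (i + 1))) with hf
  set g : ℤ → ℝ := fun i =>
    ((z i - z (i + 1)) ^ 2 / 2 + u (z (i + 1)) + v (z (i + 1)))
      - ((x i - x (i + 1)) ^ 2 / 2 + u (x (i + 1)) + v (x (i + 1))) with hg
  have hkey : (fun i : ℤ =>
      (((ξ i - ξ (i + 1)) ^ 2 / 2 + u (ξ (i + 1)) + v (ξ (i + 1)))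
        - ((z i - z (i + 1)) ^ 2 / 2 + u (z (i + 1)) + v (z (i + 1)))))
      = fun i => (f i + v (ξ (i + 1))) - g i := by
    funext i
    have := hvx (i + 1)
    simp only [hf, hg]
    linarith
  rw [hkey, Summable.tsum_sub (hmin_sum.add hsv) hz_sum, Summable.tsum_add hmin_sum hsv]
  have hvle : v η ≤ ∑' i : ℤ, v (ξ (i + 1)) := by
    have := Summable.le_tsum hsv (-1) (fun j _ => hv (ξ (j + 1)))
    simpa [hξ0] using this
  linarith
end

section
/- Let α > 1, μ ≥ 0 and ω be a μ-approximated irrational number: |q_n ω - p_n| < C q_n^{-1-μ} for infinitely many integers p_n, q_n with q_n → ∞. Fix r < 2 + (2 - 2/α)(1+μ) and set a = (2-2/α)(1+μ) - ε for small ε > 0 with r < a + 2. If for each large n there exists a 1-periodic smooth function P_n ≥ 0 with ‖P_n‖_{C^r([0,1])} ≤ C₁·q_n^{-a} (the sum u_{q_n} + v_{q_n} of the paper), and the twist map generated by ½(x-x')² + P_n(x') has no invariant circle with any rotation number ω' satisfying 0 < |ω'| < q_n^{-aα/(2(α-1)) - δ}, then with Q_n(x) = q_n^{-2} P_n(q_n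 x), the maps generated by h_n(x,x') = ½(x-x')² + Q_n(x') have no invariant circle of rotation number ω, and ‖Q_n‖_{C^r} ≤ C₂ q_n^{r-a-2} → 0. -/
open Real Filter

/-- The exact area-preserving twist map generated by `h(x,x') = ½(x-x')² + P(x')` is
`F(x,y) = (x+y, y + P'(x+y))`. It admits an invariant circle of rotation number `ω`
if there is a continuous `1`-periodic function `ψ` whose graph is `F`-invariant, i.e.
`ψ(x+ψ(x)) = ψ(x) + P'(x+ψ(x))`, and whose induced circle map `g : x ↦ x + ψ(x)`
(a lift: `g(x+1) = g(x)+1`, monotone) has rotation number `ω`. -/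
def HasInvariantCircle (P : ℝ → ℝ) (ω : ℝ) : Prop :=
  ∃ ψ : ℝ → ℝ, Continuous ψ ∧ (∀ x : ℝ, ψ (x + 1) = ψ x) ∧
    Monotone (fun x : ℝ => x + ψ x) ∧
    (∀ x : ℝ, ψ (x + ψ x) = ψ x + deriv P (x + ψ x)) ∧
    ∀ x : ℝ, Tendsto (fun n : ℕ => (((fun t : ℝ => t + ψ t)^[n] x) - x) / n) atTop (nhds ω)

private lemma per_int {f : ℝ → ℝ} (h : ∀ x, f (x + 1) = f x) :
    ∀ (x : ℝ) (k : ℤ), f (x + k) = f x := by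
  have h' : ∀ x : ℝ, f (x - 1) = f x := fun x => by
    have := h (x - 1); simpa using this.symm
  intro x k
  induction k using Int.induction_on with
  | zero => simp
  | succ n ih =>
    push_cast at ih ⊢
    rw [show x + ((n : ℝ) + 1) = (x + n) + 1 by ring, h]; exact ih
  | pred n ih =>
    push_cast at ih ⊢
    rw [show x + (-(n : ℝ) - 1) = (x + -(n : ℝ)) - 1 by ring, h']; exact ih

private lemma per_nat {f : ℝ → ℝ} {c : ℝ} (h : ∀ x, f (x + c) = f x) :
    ∀ (x : ℝ) (m : ℕ), f (x - m * c) = f x := by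
  intro x m
  induction m with
  | zero => simp
  | succ m ih =>
    have h2 := h (x - ((m : ℝ) + 1) * c)
    rw [show x - ((m : ℝ) + 1) * c + c = x - (m : ℝ) * c by ring] at h2
    push_cast
    rw [← h2]
    exact ih

private lemma cont_inf' {ι : Type*} (s : Finset ι) (hs : s.Nonempty) (f : ι → ℝ → ℝ)
    (hf : ∀ i, Continuous (f i)) : Continuous fun x => s.inf' hs fun i => f i x := by
  induction hs using Finset.Nonempty.cons_induction with
  | singleton a =>
    have : (fun x => ({a} : Finset ι).inf' (Finset.singleton_nonempty a) fun i => f i x)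
        = f a := by funext x; simp
    rw [this]; exact hf a
  | cons a s ha hs ih =>
    have : (fun x => (Finset.cons a s ha).inf' (Finset.cons_nonempty ha) fun i => f i x)
        = fun x => min (f a x) (s.inf' hs fun i => f i x) := by
      funext x; rw [Finset.inf'_cons]
    rw [this]
    exact (hf a).min ih

private lemma transfer (P : ℝ → ℝ) (hP : ContDiff ℝ (⊤ : ℕ∞) P) (hper : ∀ t : ℝ, P (t + 1) = P t)
    (q : ℕ) (hq : 1 ≤ q) (ω : ℝ) (p : ℤ)
    (h : HasInvariantCircle (fun t : ℝ => ((q : ℝ)) ^ (-2 : ℤ) * P ((q : ℝ) * t)) ω) :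
    HasInvariantCircle P ((q : ℝ) * ω - p) := by
  obtain ⟨ψ, hψc, hψper, hψmono, hψinv, hψrot⟩ := h
  have hq0 : (0:ℝ) < (q:ℝ) := by exact_mod_cast hq
  have hqne : (q:ℝ) ≠ 0 := ne_of_gt hq0
  -- the derivative of P, and its integer periodicity
  have hD1 : ∀ t : ℝ, deriv P (t + 1) = deriv P t := by
    intro t
    have h1 : (fun x : ℝ => P (x + 1)) = P := funext hper
    calc deriv P (t + 1) = deriv (fun x : ℝ => P (x + 1)) t :=
          (deriv_comp_add_const P 1 t).symm
      _ = deriv P t := by rw [h1]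
  have hDper : ∀ (t : ℝ) (k : ℤ), deriv P (t + k) = deriv P t := per_int hD1
  -- derivative of the rescaled potential
  have hQd : ∀ t : ℝ, deriv (fun t : ℝ => ((q : ℝ)) ^ (-2 : ℤ) * P ((q : ℝ) * t)) t
      = ((q:ℝ))⁻¹ * deriv P ((q:ℝ) * t) := by
    intro t
    have h1 : HasDerivAt P (deriv P ((q:ℝ)*t)) ((q:ℝ)*t) :=
      ((hP.differentiable (by simp)) ((q:ℝ)*t)).hasDerivAt
    have h2 : HasDerivAt (fun t : ℝ => (q:ℝ) * t) (q:ℝ) t := by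
      simpa using (hasDerivAt_id t).const_mul (q:ℝ)
    have h3 : HasDerivAt (fun t : ℝ => ((q : ℝ)) ^ (-2 : ℤ) * P ((q : ℝ) * t))
        ((q:ℝ) ^ (-2:ℤ) * (deriv P ((q:ℝ)*t) * (q:ℝ))) t :=
      (h1.comp t h2).const_mul ((q:ℝ) ^ (-2:ℤ))
    rw [h3.deriv]
    rw [zpow_neg, show (2:ℤ) = (2:ℕ) by rfl, zpow_natCast]
    field_simp
  set φ : ℝ → ℝ := fun X => (q:ℝ) * ψ (X / q) with hφdef
  set g : ℝ → ℝ := fun t => t + ψ t with hgdef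
  set G : ℝ → ℝ := fun X => X + φ X with hGdef
  have hφc : Continuous φ := continuous_const.mul (hψc.comp (continuous_id.div_const _))
  have hGg : ∀ X, G X = (q:ℝ) * g (X / q) := by
    intro X; simp only [hGdef, hφdef, hgdef]; field_simp
  have hφper : ∀ X, φ (X + q) = φ X := by
    intro X
    simp only [hφdef]
    rw [show (X + q) / q = X / q + 1 by field_simp, hψper]
  have hφperm : ∀ (X : ℝ) (m : ℕ), φ (X - m * q) = φ X := per_nat hφper
  have hGmono : Monotone G := by
    intro x y hxy
    rw [hGg, hGg]
    have h1 : x / q ≤ y / q := by gcongr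
    exact mul_le_mul_of_nonneg_left (hψmono h1) hq0.le
  have hfe : ∀ X, φ (G X) = φ X + deriv P (G X) := by
    intro X
    have h2 : G X / q = g (X / q) := by rw [hGg]; field_simp
    have h1 := hψinv (X / q)
    calc φ (G X) = (q:ℝ) * ψ (G X / q) := rfl
      _ = (q:ℝ) * ψ (g (X / q)) := by rw [h2]
      _ = (q:ℝ) * (ψ (X/q) + deriv (fun t : ℝ => ((q : ℝ)) ^ (-2 : ℤ) * P ((q : ℝ) * t)) (g (X/q))) := by
          simp only [hgdef]
          rw [← h1]
      _ = φ X + (q:ℝ) * (((q:ℝ))⁻¹ * deriv P ((q:ℝ) * g (X/q))) := by rw [hQd]; ring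
      _ = φ X + deriv P (G X) := by rw [← hGg]; field_simp
  have hgiter : ∀ (n : ℕ) (X : ℝ), G^[n] X = (q:ℝ) * g^[n] (X / q) := by
    intro n
    induction n with
    | zero => intro X; simp only [Function.iterate_zero, id_eq]; field_simp
    | succ n ih =>
      intro X
      rw [Function.iterate_succ_apply', Function.iterate_succ_apply', ih, hGg,
        mul_div_cancel_left₀ _ hqne]
  have hGrot : ∀ X, Tendsto (fun n : ℕ => (G^[n] X - X) / n) atTop (nhds ((q:ℝ) * ω)) := by
    intro X
    have h1 := (hψrot (X / q)).const_mul (q:ℝ)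
    refine h1.congr ?_
    intro n
    rw [hgiter]
    rw [show (q:ℝ) * g^[n] (X/q) - X = (q:ℝ) * (g^[n] (X/q) - X/q) by field_simp]
    ring
  -- the 1-periodic envelope
  have hne : (Finset.range q).Nonempty := ⟨0, Finset.mem_range.mpr hq⟩
  set φm : ℝ → ℝ := fun X => (Finset.range q).inf' hne (fun j => φ (X - j)) with hφmdef
  have hφmle : ∀ (X : ℝ) (j : ℕ), j ∈ Finset.range q → φm X ≤ φ (X - j) :=
    fun X j hj => Finset.inf'_le _ hj
  have hφmex : ∀ X : ℝ, ∃ j ∈ Finset.range q, φm X = φ (X - j) := by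
    intro X
    obtain ⟨j, hj, he⟩ := Finset.exists_mem_eq_inf' hne (fun j : ℕ => φ (X - j))
    exact ⟨j, hj, he⟩
  have hφmc : Continuous φm :=
    cont_inf' _ hne _ (fun j => hφc.comp (continuous_id.sub continuous_const))
  have hφm1 : ∀ X, φm (X + 1) = φm X := by
    intro X
    apply le_antisymm
    · apply Finset.le_inf'
      intro j hj
      rcases Nat.lt_or_ge (j+1) q with h' | h'
      · have h2 := hφmle (X+1) (j+1) (Finset.mem_range.mpr h')
        calc φm (X+1) ≤ φ (X + 1 - ((j:ℕ)+1:ℕ)) := h2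
          _ = φ (X - j) := by push_cast; ring_nf
      · have hjq : j + 1 = q := le_antisymm (Finset.mem_range.mp hj) h'
        have h2 := hφmle (X+1) 0 (Finset.mem_range.mpr (lt_of_lt_of_le one_pos hq))
        calc φm (X+1) ≤ φ (X + 1 - (0:ℕ)) := h2
          _ = φ (X + 1 - q + q) := by push_cast; ring_nf
          _ = φ (X + 1 - q) := by
              have := hφperm (X + 1) 1; push_cast at this
              rw [show X + 1 - (q:ℝ) + q = X + 1 by ring]
              rw [show X + 1 - (q:ℝ) = X + 1 - 1 * q by ring, this]
          _ = φ (X - j) := by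
              congr 1
              have : ((j:ℝ)) + 1 = q := by exact_mod_cast hjq
              linarith
    · apply Finset.le_inf'
      intro j hj
      rcases Nat.eq_zero_or_pos j with h' | h'
      · subst h'
        have h2 := hφmle X (q - 1) (Finset.mem_range.mpr (by omega))
        calc φm X ≤ φ (X - ((q-1:ℕ):ℝ)) := h2
          _ = φ (X + 1 - 1 * q) := by
              congr 1
              have : ((q-1:ℕ):ℝ) = (q:ℝ) - 1 := by
                have : (1:ℕ) ≤ q := hq
                push_cast [Nat.cast_sub this]; ring
              rw [this]; ring
          _ = φ (X + 1) := by
              have := hφperm (X + 1) 1; push_cast at this; rw [this]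
          _ = φ (X + 1 - (0:ℕ)) := by norm_num
      · have h2 := hφmle X (j - 1) (Finset.mem_range.mpr (by
          have := Finset.mem_range.mp hj; omega))
        calc φm X ≤ φ (X - ((j-1:ℕ):ℝ)) := h2
          _ = φ (X + 1 - j) := by
              congr 1
              have : ((j-1:ℕ):ℝ) = (j:ℝ) - 1 := by
                push_cast [Nat.cast_sub h']; ring
              rw [this]; ring
  have hφmint : ∀ (X : ℝ) (k : ℤ), φm (X + k) = φm X := per_int hφm1
  have hφmmono : Monotone (fun X => X + φm X) := by
    intro x y hxy
    obtain ⟨j, hj, he⟩ := hφmex y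
    have h1 := hφmle x j hj
    have h2 := hGmono (show x - j ≤ y - j by linarith)
    simp only [hGdef] at h2
    simp only
    rw [he]
    linarith
  -- the key ordering lemma
  have key : ∀ (X : ℝ) (j : ℕ), j ∈ Finset.range q → φm X = φ (X - j) →
      φm (X + φm X) = φ ((X + φm X) - j) ∧
      φ ((X + φm X) - j) = φm X + deriv P (X + φm X) := by
    intro X j hj hje
    set Y := X + φm X with hYdef
    have hDj : ∀ k : ℕ, deriv P (Y - k) = deriv P Y := by
      intro k
      have h1 := hDper Y (-(k:ℤ))
      rw [show Y + ((-(k:ℤ) : ℤ) : ℝ) = Y - (k:ℕ) by push_cast; ring] at h1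
      exact h1
    have h1 : φ (Y - j) = φm X + deriv P Y := by
      have h2 := hfe (X - j)
      have hGXj : G (X - j) = Y - j := by simp only [hGdef]; rw [← hje, hYdef]; ring
      rw [hGXj] at h2
      rw [h2, ← hje, hDj j]
    refine ⟨le_antisymm (h1 ▸ (by rw [← h1]; exact hφmle Y j hj)) ?_, h1⟩
    apply Finset.le_inf'
    intro k hk
    -- show φ (Y - j) ≤ φ (Y - k)
    have hbk : Y ≤ X + φ (X - k) := by
      have := hφmle X k hk; rw [hYdef]; linarith
    obtain ⟨m, hm⟩ := exists_nat_ge (X + φ (X - k) - Y)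
    have hmq : X + φ (X - k) - m * q ≤ Y := by
      have h2 : (m:ℝ) ≤ (m:ℝ) * q := by
        nlinarith [Nat.cast_nonneg (α := ℝ) m, hq0, show (1:ℝ) ≤ (q:ℝ) from by exact_mod_cast hq]
      linarith
    set Gk : ℝ → ℝ := fun Z => Z + φ (Z - k) with hGkdef
    have hGkc : Continuous Gk := continuous_id.add (hφc.comp (continuous_id.sub continuous_const))
    have hGkshift : Gk (X - m * q) = Gk X - m * q := by
      simp only [hGkdef]
      rw [show X - (m:ℝ) * q - k = X - k - m * q by ring, hφperm (X - k) m]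
      ring
    have hsub : X - (m:ℝ) * q ≤ X := by
      have : (0:ℝ) ≤ (m:ℝ) * q := by positivity
      linarith
    have hY1 : Y ∈ Set.Icc (Gk (X - (m:ℝ) * q)) (Gk X) := by
      rw [hGkshift]
      exact ⟨by simp only [hGkdef]; linarith, by simp only [hGkdef]; exact hbk⟩
    obtain ⟨X', hX'mem, hX'⟩ := intermediate_value_Icc hsub hGkc.continuousOn hY1
    have hX'le : X' ≤ X := hX'mem.2
    have hGkX' : X' + φ (X' - k) = Y := hX'
    have hG2 : G (X' - k) = Y - k := by simp only [hGdef]; linarith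
    have h3 := hfe (X' - k)
    rw [hG2] at h3
    -- h3 : φ (Y - k) = φ (X' - k) + deriv P (Y - k)
    have h4 : φ (X' - k) = Y - X' := by linarith
    have h5 : φ (Y - j) = (Y - X) + deriv P Y := by
      rw [h1, hYdef]; ring
    rw [h5, h3, hDj k, h4]
    linarith
  have hfem : ∀ X, φm (X + φm X) = φm X + deriv P (X + φm X) := by
    intro X
    obtain ⟨j, hj, he⟩ := hφmex X
    obtain ⟨k1, k2⟩ := key X j hj he
    rw [k1, k2]
  -- orbits of the envelope follow translated orbits of φ
  have horb : ∀ X : ℝ, ∃ j ∈ Finset.range q, ∀ m : ℕ,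
      (fun Z => Z + φm Z)^[m] X = (fun Z => Z + φ (Z - j))^[m] X := by
    intro X
    obtain ⟨j, hj, he⟩ := hφmex X
    refine ⟨j, hj, ?_⟩
    have main : ∀ m : ℕ, (fun Z => Z + φm Z)^[m] X = (fun Z => Z + φ (Z - j))^[m] X ∧
        φm ((fun Z => Z + φ (Z - j))^[m] X) = φ ((fun Z => Z + φ (Z - j))^[m] X - j) := by
      intro m
      induction m with
      | zero => exact ⟨rfl, he⟩
      | succ m ih =>
        obtain ⟨ih1, ih2⟩ := ih
        set Y := (fun Z => Z + φ (Z - j))^[m] X with hY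
        constructor
        · rw [Function.iterate_succ_apply', Function.iterate_succ_apply', ih1, ← hY]
          show Y + φm Y = Y + φ (Y - j)
          rw [ih2]
        · rw [Function.iterate_succ_apply', ← hY]
          have hk := (key Y j hj ih2).1
          rw [ih2] at hk
          exact hk
    exact fun m => (main m).1
  have hGjiter : ∀ (j : ℕ) (m : ℕ) (X : ℝ),
      (fun Z => Z + φ (Z - j))^[m] X = G^[m] (X - j) + j := by
    intro j m
    induction m with
    | zero => intro X; simp
    | succ m ih =>
      intro X
      rw [Function.iterate_succ_apply', Function.iterate_succ_apply', ih]
      show G^[m] (X - j) + j + φ (G^[m] (X - j) + j - j) = G (G^[m] (X - j)) + j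
      rw [add_sub_cancel_right]
      simp only [hGdef]
      ring
  -- assemble the invariant circle for P
  refine ⟨fun X => φm X - p, by exact hφmc.sub continuous_const, ?_, ?_, ?_, ?_⟩
  · intro X; simp only; rw [hφm1]
  · intro x y hxy
    have := hφmmono hxy
    simp only at this ⊢
    linarith
  · intro X
    simp only
    have e1 : X + (φm X - p) = (X + φm X) + ((-p : ℤ) : ℝ) := by push_cast; ring
    rw [e1, hφmint (X + φm X) (-p), hfem X]
    have e2 : deriv P ((X + φm X) + ((-p : ℤ) : ℝ)) = deriv P (X + φm X) := hDper _ _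
    rw [e2]
    ring
  · intro X
    obtain ⟨j, hj, horbj⟩ := horb X
    have hiter : ∀ m : ℕ, (fun Z => Z + (φm Z - p))^[m] X
        = (fun Z => Z + φm Z)^[m] X - m * p := by
      intro m
      induction m with
      | zero => simp
      | succ m ih =>
        rw [Function.iterate_succ_apply', Function.iterate_succ_apply', ih]
        set W := (fun Z => Z + φm Z)^[m] X with hW
        show W - (m:ℝ) * p + (φm (W - (m:ℝ) * p) - p) = W + φm W - ((m:ℕ)+1 : ℕ) * p
        have e3 : W - (m:ℝ) * p = W + ((-(m * p) : ℤ) : ℝ) := by push_cast; ring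
        rw [e3, hφmint W (-(m*p))]
        push_cast
        ring
    have hbase := (hGrot (X - j)).sub_const (p : ℝ)
    refine hbase.congr' ?_
    filter_upwards [eventually_ge_atTop 1] with m hm
    have hmne : (m:ℝ) ≠ 0 := by
      have : (1:ℝ) ≤ (m:ℝ) := by exact_mod_cast hm
      linarith
    rw [hiter m, horbj m, hGjiter j m X]
    field_simp
    ring

/-- assembly of the main theorem: let `ω` be a `μ`-approximated irrational
number, `r < 2 + (2-2/α)(1+μ)`, `a = (2-2/α)(1+μ) - ε` with `r < a + 2`. If the 1-periodic
perturbations `P_n ≥ 0` satisfy `‖P_n‖_{C^r} ≤ C₁ q_n^{-a}` and the map generated by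
`½(x-x')² + P_n(x')` has no invariant circle with rotation number `ω'` for any
`0 < |ω'| < q_n^{-aα/(2(α-1))-δ}` (for large `n`), then with `Q_n(x) = q_n^{-2}P_n(q_n x)`
the maps generated by `½(x-x')² + Q_n(x')` have no invariant circle of rotation number `ω`,
while `‖Q_n‖_{C^r} ≤ C₂ q_n^{r-a-2} → 0`. -/
theorem main_theorem_assembly
    (α μ ε δ ω C C₁ : ℝ) (hα : 1 < α) (hμ : 0 ≤ μ) (hε : 0 < ε) (hδ : 0 < δ)
    (hC : 0 < C) (hC₁ : 0 < C₁) (hirr : Irrational ω)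
    (a : ℝ) (ha : a = (2 - 2 / α) * (1 + μ) - ε)
    (r : ℕ) (hr : (r : ℝ) < a + 2)
    (hδε : a * α / (2 * (α - 1)) + δ < 1 + μ)
    (p : ℕ → ℤ) (q : ℕ → ℕ) (hq1 : ∀ n, 1 ≤ q n) (hq : Tendsto q atTop atTop)
    (happrox : ∀ n : ℕ, |(q n : ℝ) * ω - (p n : ℝ)| < C * (q n : ℝ) ^ (-(1 + μ)))
    (P : ℕ → ℝ → ℝ) (hPsmooth : ∀ n, ContDiff ℝ (⊤ : ℕ∞) (P n))
    (hPper : ∀ n, ∀ t : ℝ, P n (t + 1) = P n t) (hPpos : ∀ n, ∀ t : ℝ, 0 ≤ P n t)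
    (hPbound : ∀ n, ∀ k ≤ r, ∀ t : ℝ, |iteratedDeriv k (P n) t| ≤ C₁ * (q n : ℝ) ^ (-a))
    (hnocircle : ∃ N : ℕ, ∀ n : ℕ, N ≤ n → ∀ ω' : ℝ,
      0 < |ω'| → |ω'| < (q n : ℝ) ^ (-(a * α / (2 * (α - 1))) - δ) →
        ¬ HasInvariantCircle (P n) ω') :
    (∃ N' : ℕ, ∀ n : ℕ, N' ≤ n →
        ¬ HasInvariantCircle (fun t : ℝ => ((q n : ℝ)) ^ (-2 : ℤ) * P n ((q n : ℝ) * t)) ω) ∧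
      (∃ C₂ : ℝ, 0 < C₂ ∧ ∀ n : ℕ, ∀ k ≤ r, ∀ t : ℝ,
        |iteratedDeriv k (fun y : ℝ => ((q n : ℝ)) ^ (-2 : ℤ) * P n ((q n : ℝ) * y)) t|
          ≤ C₂ * (q n : ℝ) ^ ((r : ℝ) - a - 2)) ∧
      Tendsto (fun n : ℕ => (q n : ℝ) ^ ((r : ℝ) - a - 2)) atTop (nhds 0) := by
  obtain ⟨N, hN⟩ := hnocircle
  have hqR : ∀ n, (1:ℝ) ≤ (q n : ℝ) := fun n => by exact_mod_cast hq1 n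
  have hqpos : ∀ n, (0:ℝ) < (q n : ℝ) := fun n => lt_of_lt_of_le one_pos (hqR n)
  have hexp : 0 < 1 + μ - (a * α / (2 * (α - 1))) - δ := by linarith
  have hqatTop : Tendsto (fun n => (q n : ℝ)) atTop atTop :=
    tendsto_natCast_atTop_atTop.comp hq
  have htend : Tendsto (fun n => (q n : ℝ) ^ (1 + μ - (a * α / (2 * (α - 1))) - δ))
      atTop atTop := (tendsto_rpow_atTop hexp).comp hqatTop
  obtain ⟨M, hM⟩ := eventually_atTop.mp (htend.eventually_ge_atTop C)
  refine ⟨⟨max N M, ?_⟩, ⟨C₁, hC₁, ?_⟩, ?_⟩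
  · intro n hn hcirc
    have htr := transfer (P n) (hPsmooth n) (hPper n) (q n) (hq1 n) ω (p n) hcirc
    set ω' : ℝ := (q n : ℝ) * ω - (p n : ℝ) with hω'
    have hω'ne : ω' ≠ 0 := by
      intro h0
      apply hirr
      refine ⟨(p n : ℚ) / (q n : ℚ), ?_⟩
      have h1 : (q n : ℝ) * ω = (p n : ℝ) := by
        have := sub_eq_zero.mp h0
        linarith [this]
      push_cast
      rw [div_eq_iff (ne_of_gt (hqpos n))]
      linarith [h1]
    have h1 : |ω'| < C * (q n : ℝ) ^ (-(1 + μ)) := happrox n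
    have h2 : C * (q n : ℝ) ^ (-(1 + μ)) ≤ (q n : ℝ) ^ (-(a * α / (2 * (α - 1))) - δ) := by
      have hM' := hM n (le_trans (le_max_right _ _) hn)
      have e1 : (q n : ℝ) ^ (-(a * α / (2 * (α - 1))) - δ)
          = (q n : ℝ) ^ (1 + μ - (a * α / (2 * (α - 1))) - δ) * (q n : ℝ) ^ (-(1 + μ)) := by
        rw [← rpow_add (hqpos n)]
        ring_nf
      rw [e1]
      exact mul_le_mul_of_nonneg_right hM' (rpow_nonneg (hqpos n).le _)
    exact hN n (le_trans (le_max_left _ _) hn) ω' (abs_pos.mpr hω'ne)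
      (lt_of_lt_of_le h1 h2) htr
  · intro n k hk t
    have hcd : ContDiff ℝ (k : ℕ∞) (P n) := (hPsmooth n).of_le (by exact_mod_cast le_top)
    have hcdq : ContDiff ℝ (k : ℕ∞) (fun y : ℝ => P n ((q n : ℝ) * y)) :=
      hcd.comp (contDiff_const.mul contDiff_id)
    have e1 : iteratedDeriv k (fun y : ℝ => ((q n : ℝ)) ^ (-2 : ℤ) * P n ((q n : ℝ) * y)) t
        = ((q n : ℝ)) ^ (-2 : ℤ) * iteratedDeriv k (fun y : ℝ => P n ((q n : ℝ) * y)) t := by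
      have := iteratedDerivWithin_const_mul (Set.mem_univ t) uniqueDiffOn_univ
        (((q n : ℝ)) ^ (-2 : ℤ)) (hcdq.contDiffAt.contDiffWithinAt)
      simpa [iteratedDerivWithin_univ] using this
    have e2 : iteratedDeriv k (fun y : ℝ => P n ((q n : ℝ) * y)) t
        = (q n : ℝ) ^ (k : ℕ) * iteratedDeriv k (P n) ((q n : ℝ) * t) :=
      congrFun (iteratedDeriv_comp_const_mul hcd ((q n : ℝ))) t
    rw [e1, e2, abs_mul, abs_mul]
    have hz : |((q n : ℝ)) ^ (-2 : ℤ)| = ((q n : ℝ)) ^ (-2 : ℤ) :=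
      abs_of_pos (zpow_pos (hqpos n) _)
    have hp : |(q n : ℝ) ^ (k : ℕ)| = (q n : ℝ) ^ (k : ℕ) :=
      abs_of_pos (pow_pos (hqpos n) _)
    rw [hz, hp]
    have h3 := hPbound n k hk ((q n : ℝ) * t)
    have step1 : ((q n : ℝ)) ^ (-2 : ℤ) * ((q n : ℝ) ^ (k : ℕ) * |iteratedDeriv k (P n) ((q n : ℝ) * t)|)
        ≤ ((q n : ℝ)) ^ (-2 : ℤ) * ((q n : ℝ) ^ (k : ℕ) * (C₁ * (q n : ℝ) ^ (-a))) := by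
      have h4 : (0:ℝ) ≤ ((q n : ℝ)) ^ (-2 : ℤ) := (zpow_pos (hqpos n) _).le
      have h5 : (0:ℝ) ≤ (q n : ℝ) ^ (k : ℕ) := (pow_pos (hqpos n) _).le
      gcongr
    refine le_trans step1 ?_
    have e3 : ((q n : ℝ)) ^ (-2 : ℤ) * ((q n : ℝ) ^ (k : ℕ) * (C₁ * (q n : ℝ) ^ (-a)))
        = C₁ * (q n : ℝ) ^ ((k : ℝ) - a - 2) := by
      rw [← rpow_intCast (q n : ℝ) (-2), ← rpow_natCast (q n : ℝ) k]
      rw [show (((-2 : ℤ) : ℝ)) = -2 by norm_num]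
      rw [show ((q n : ℝ) ^ (-2 : ℝ) * ((q n : ℝ) ^ (k : ℝ) * (C₁ * (q n : ℝ) ^ (-a))))
        = C₁ * ((q n : ℝ) ^ (-2 : ℝ) * (q n : ℝ) ^ (k : ℝ) * (q n : ℝ) ^ (-a)) by ring]
      rw [← rpow_add (hqpos n), ← rpow_add (hqpos n)]
      ring_nf
    rw [e3]
    have e4 : (q n : ℝ) ^ ((k : ℝ) - a - 2) ≤ (q n : ℝ) ^ ((r : ℝ) - a - 2) := by
      apply rpow_le_rpow_of_exponent_le (hqR n)
      have : (k : ℝ) ≤ (r : ℝ) := by exact_mod_cast hk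
      linarith
    exact mul_le_mul_of_nonneg_left e4 hC₁.le
  · have h0 : (fun n : ℕ => (q n : ℝ) ^ ((r : ℝ) - a - 2))
        = fun n : ℕ => (q n : ℝ) ^ (-(a + 2 - (r : ℝ))) := by
      funext n; congr 1; ring
    rw [h0]
    exact (tendsto_rpow_neg_atTop (by linarith)).comp hqatTop
end
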